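/- arXiv:1304.5800 — 2 statements merged into one kernel-verified Lean document; each statement's English description precedes it below -/
import Mathlib

section
/- Let a > 0 and let A(z) = ∏_{n=0}^∞ (1 - z²/(n+a)²). Then A(z) = Γ(a)²/(Γ(a+z)Γ(a−z)), and for every nonnegative integer k, |A'(k+a)| = Γ(a)² Γ(k+1)/Γ(k+2a). -/
open Complex

/-!
Euler's limit `Γ(s) = lim n^s n! / (s (s+1) ⋯ (s+n))` turns the partial products of `A` into
`Γₙ(a)² / (Γₙ(a+z) Γₙ(a-z))`, which converge to `Γ(a)² / (Γ(a+z) Γ(a-z))` because `1/Γₙ → 1/Γ`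
everywhere, poles included. Differentiating `1/Γ(s) = s / Γ(s+1)` gives `(1/Γ)'(-k) = (-1)^k k!`
by induction; since `1/Γ(a-z)` vanishes at `z = k + a`, `A'(k+a) = -Γ(a)² (1/Γ)'(-k) / Γ(k+2a)`.
-/

open Filter Topology Finset
open scoped Nat

namespace Complex

theorem summable_sq_div_natCast_add_sq (a : ℝ) (z : ℂ) :
    Summable fun n : ℕ ↦ z ^ 2 / ((n : ℂ) + a) ^ 2 := by
  refine .of_norm ?_
  have h := ((Real.summable_one_div_nat_add_rpow a 2).mpr one_lt_two).mul_left (‖z‖ ^ 2)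
  refine h.congr fun n ↦ ?_
  rw [norm_div, norm_pow, norm_pow, ← ofReal_natCast, ← ofReal_add, norm_real, Real.norm_eq_abs,
    Real.rpow_two, mul_one_div]

theorem tendsto_inv_GammaSeq (s : ℂ) :
    Tendsto (fun n ↦ (GammaSeq s n)⁻¹) atTop (𝓝 (Gamma s)⁻¹) := by
  by_cases hs : ∃ m : ℕ, s = -m
  · obtain ⟨m, rfl⟩ := hs
    rw [Gamma_neg_nat_eq_zero, inv_zero]
    refine tendsto_const_nhds.congr' ?_
    filter_upwards [eventually_ge_atTop m] with n hn
    rw [GammaSeq, prod_eq_zero (mem_range.mpr (Nat.lt_succ_of_le hn)) (by ring), div_zero,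
      inv_zero]
  · push Not at hs
    exact (GammaSeq_tendsto_Gamma s).inv₀ (Gamma_ne_zero hs)

theorem GammaSeq_sq_div_GammaSeq_add_mul_GammaSeq_sub {a : ℂ} (ha : ∀ j : ℕ, a + j ≠ 0)
    (z : ℂ) {n : ℕ} (hn : n ≠ 0) :
    GammaSeq a n ^ 2 / (GammaSeq (a + z) n * GammaSeq (a - z) n) =
      ∏ j ∈ range (n + 1), (1 - z ^ 2 / ((j : ℂ) + a) ^ 2) := by
  have hn' : (n : ℂ) ≠ 0 := Nat.cast_ne_zero.mpr hn
  have hpow : (n : ℂ) ^ (a + z) * (n : ℂ) ^ (a - z) = ((n : ℂ) ^ a) ^ 2 := by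
    rw [pow_two, ← cpow_add _ _ hn', ← cpow_add _ _ hn']
    ring_nf
  have hfactor : ∀ j ∈ range (n + 1), 1 - z ^ 2 / ((j : ℂ) + a) ^ 2 =
      (a + z + j) * (a - z + j) / (a + j) ^ 2 := fun j _ ↦ by
    rw [add_comm (j : ℂ)]
    field_simp [ha j]
    ring
  have hprod : (∏ j ∈ range (n + 1), (a + j)) ≠ 0 := prod_ne_zero_iff.mpr fun j _ ↦ ha j
  have hcpow : (n : ℂ) ^ a ≠ 0 := by simp [cpow_eq_zero_iff, hn']
  rw [prod_congr rfl hfactor, prod_div_distrib, prod_mul_distrib, prod_pow]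
  simp only [GammaSeq, div_pow, mul_pow]
  rw [div_mul_div_comm, mul_mul_mul_comm, hpow]
  field_simp [Nat.cast_ne_zero.mpr n.factorial_ne_zero]

theorem hasProd_one_sub_sq_div_natCast_add_sq {a : ℝ} (ha : ∀ n : ℕ, (a : ℂ) + n ≠ 0) (z : ℂ) :
    HasProd (fun n : ℕ ↦ 1 - z ^ 2 / ((n : ℂ) + a) ^ 2)
      (Gamma a ^ 2 / (Gamma (a + z) * Gamma (a - z))) := by
  have hmult : Multipliable fun n : ℕ ↦ 1 - z ^ 2 / ((n : ℂ) + a) ^ 2 := by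
    simpa only [sub_eq_add_neg] using
      Complex.multipliable_one_add_of_summable (summable_sq_div_natCast_add_sq a z).neg
  have hGammaSeq : Tendsto (fun n ↦ GammaSeq a n ^ 2 / (GammaSeq (a + z) n * GammaSeq (a - z) n))
      atTop (𝓝 (Gamma a ^ 2 / (Gamma (a + z) * Gamma (a - z)))) := by
    simp only [div_eq_mul_inv, mul_inv]
    exact ((GammaSeq_tendsto_Gamma a).pow 2).mul
      ((tendsto_inv_GammaSeq _).mul (tendsto_inv_GammaSeq _))
  have hpartial : Tendsto (fun n ↦ ∏ j ∈ range (n + 1), (1 - z ^ 2 / ((j : ℂ) + a) ^ 2)) atTop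
      (𝓝 (Gamma a ^ 2 / (Gamma (a + z) * Gamma (a - z)))) := by
    refine hGammaSeq.congr' ?_
    filter_upwards [eventually_ne_atTop 0] with n hn
    exact GammaSeq_sq_div_GammaSeq_add_mul_GammaSeq_sub ha z hn
  convert hmult.hasProd
  exact tendsto_nhds_unique hpartial
    (hmult.hasProd.tendsto_prod_nat.comp (tendsto_add_atTop_nat 1))

theorem hasDerivAt_inv_Gamma_of_add_one {s f' : ℂ}
    (h : HasDerivAt (fun s ↦ (Gamma s)⁻¹) f' (s + 1)) :
    HasDerivAt (fun s ↦ (Gamma s)⁻¹) ((Gamma (s + 1))⁻¹ + s * f') s := by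
  rw [funext one_div_Gamma_eq_self_mul_one_div_Gamma_add_one]
  simpa using (hasDerivAt_id' s).fun_mul h.comp_add_const

theorem hasDerivAt_inv_Gamma_neg_nat (k : ℕ) :
    HasDerivAt (fun s ↦ (Gamma s)⁻¹) ((-1) ^ k * k !) (-k) := by
  induction k with
  | zero =>
    simpa using hasDerivAt_inv_Gamma_of_add_one
      (s := 0) (differentiable_one_div_Gamma _).hasDerivAt
  | succ k ih =>
    have hk : -((k + 1 : ℕ) : ℂ) + 1 = -k := by push_cast; ring
    convert hasDerivAt_inv_Gamma_of_add_one (hk ▸ ih) using 1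
    rw [hk, Gamma_neg_nat_eq_zero, Nat.factorial_succ]
    push_cast
    ring

theorem hasDerivAt_inv_Gamma_add_mul_inv_Gamma_sub (a : ℂ) (k : ℕ) :
    HasDerivAt (fun z ↦ (Gamma (a + z))⁻¹ * (Gamma (a - z))⁻¹)
      ((-1) ^ (k + 1) * k ! / Gamma (k + 2 * a)) (k + a) := by
  have hsub : a - (k + a) = -k := by ring
  have hu := ((differentiable_one_div_Gamma _).hasDerivAt).comp_const_add a (k + a)
  have hv := (hsub ▸ hasDerivAt_inv_Gamma_neg_nat k).comp_const_sub a (k + a)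
  refine (hu.fun_mul hv).congr_deriv ?_
  rw [hsub, Gamma_neg_nat_eq_zero, show a + (k + a) = k + 2 * a by ring]
  ring

end Complex

/-- For `a > 0` and `A(z) = ∏_{n≥0} (1 - z²/(n+a)²)` one has
`A(z) = Γ(a)²/(Γ(a+z)Γ(a-z))`, and `|A'(k+a)| = Γ(a)² Γ(k+1)/Γ(k+2a)` for
every nonnegative integer `k`. -/
theorem stmt_3 (a : ℝ) (ha : 0 < a) (A : ℂ → ℂ)
    (hA : ∀ z : ℂ, A z = ∏' n : ℕ, (1 - z ^ 2 / ((n : ℂ) + (a : ℂ)) ^ 2)) :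
    (∀ z : ℂ, A z = (Real.Gamma a : ℂ) ^ 2 /
        (Complex.Gamma ((a : ℂ) + z) * Complex.Gamma ((a : ℂ) - z))) ∧
    (∀ k : ℕ, ‖deriv A ((k : ℂ) + (a : ℂ))‖ =
        Real.Gamma a ^ 2 * Real.Gamma ((k : ℝ) + 1) / Real.Gamma ((k : ℝ) + 2 * a)) := by
  have ha' (n : ℕ) : (a : ℂ) + n ≠ 0 := mod_cast (by positivity : a + n ≠ 0)
  have hA_eq (z : ℂ) : A z = (Real.Gamma a : ℂ) ^ 2 / (Gamma (a + z) * Gamma (a - z)) := by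
    rw [hA, (hasProd_one_sub_sq_div_natCast_add_sq ha' z).tprod_eq, Gamma_ofReal]
  refine ⟨hA_eq, fun k ↦ ?_⟩
  have hA_fun : A = fun z ↦ (Real.Gamma a : ℂ) ^ 2 * ((Gamma (a + z))⁻¹ * (Gamma (a - z))⁻¹) :=
    funext fun z ↦ by rw [hA_eq, div_eq_mul_inv, mul_inv]
  have hk : ((k + 2 * a : ℝ) : ℂ) = k + 2 * a := by push_cast; ring
  have hGamma_pos : 0 < Real.Gamma (k + 2 * a) := Real.Gamma_pos_of_pos (by positivity)
  rw [hA_fun, ((hasDerivAt_inv_Gamma_add_mul_inv_Gamma_sub a k).const_mul _).deriv, ← hk,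
    Gamma_ofReal, Real.Gamma_nat_eq_factorial]
  simp [abs_of_pos hGamma_pos, mul_div_assoc]
end

section
/- Suppose {tₙ} is the zero set of an entire function F of the Krein class 𝒦₁ (i.e. F is real on ℝ, has only simple real nonzero zeros tₙ, and 1/F(z) = q + ∑ₙ cₙ(1/(tₙ−z) − 1/tₙ) with cₙ = −1/F'(tₙ) and ∑ₙ |cₙ|/tₙ² < ∞). Then for every proper nonempty finite set S of additional distinct real points disjoint from {tₙ} and from 0, the function G(z) = F(z)·∏_{s∈S}(1 − z/s) is again in 𝒦₁; in particular {tₙ} ∪ S is also the zero set of a 𝒦₁ function. -/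
/-!
It suffices to multiply by one factor `1 - z/s` at a time. The zeros `tₙ` of an entire function
that is not identically zero tend to infinity; hence the kernel terms
`cₙ (1/(tₙ - z) - 1/tₙ) = cₙ z / (tₙ (tₙ - z))` are `O(|cₙ|/tₙ²)`, and `|1 - tₙ/s| ≥ 1` for large
`n`, so the new coefficients `cₙ / (1 - tₙ/s)` still satisfy the summability condition. The
expansion of `1/(F(z)(1 - z/s))` follows by applying a partial-fraction identity termwise to the
expansions of `1/F` at `z` and at `s`; the new zero `s` carries the coefficient `s/F(s)`.
-/

open Complex

/-- Krein's class `𝒦₁`: `F` is entire, real on `ℝ`, `F(0) ≠ 0`, all zeros of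
`F` are real and simple, they form a sequence `tₙ` of nonzero reals, and `1/F`
admits the expansion `1/F(z) = q + ∑ₙ cₙ(1/(tₙ-z) - 1/tₙ)` with
`cₙ = -1/F'(tₙ)` and `∑ₙ |cₙ|/tₙ² < ∞`. -/
def KreinK1 (F : ℂ → ℂ) : Prop :=
  Differentiable ℂ F ∧ (∀ x : ℝ, (F (x : ℂ)).im = 0) ∧ F 0 ≠ 0 ∧
  (∀ z : ℂ, F z = 0 → deriv F z ≠ 0) ∧
  ∃ t : ℕ → ℝ, (∀ n, t n ≠ 0) ∧ Function.Injective t ∧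
    (∀ z : ℂ, F z = 0 ↔ ∃ n, z = (t n : ℂ)) ∧
    Summable (fun n => ‖1 / deriv F ((t n : ℂ))‖ / (t n) ^ 2) ∧
    ∃ q : ℂ, ∀ z : ℂ, (∀ n, z ≠ (t n : ℂ)) →
      1 / F z = q + ∑' n, (-1 / deriv F ((t n : ℂ))) *
        (1 / ((t n : ℂ) - z) - 1 / (t n : ℂ))

open Filter Topology

theorem Differentiable.tendsto_cocompact_of_injective_zeros {G : ℂ → ℂ} (hG : Differentiable ℂ G)
    {z₀ : ℂ} (hz₀ : G z₀ ≠ 0) {a : ℕ → ℂ} (ha : Function.Injective a)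
    (hzero : ∀ n, G (a n) = 0) :
    Tendsto a atTop (cocompact ℂ) := by
  have hcodisc : ∀ᶠ z in codiscreteWithin Set.univ, G z ≠ 0 :=
    ((hG.differentiableOn.analyticOnNhd isOpen_univ).eqOn_zero_or_eventually_ne_zero_of_preconnected
      isPreconnected_univ).resolve_left fun h => hz₀ (h (Set.mem_univ z₀))
  rw [← Nat.cofinite_eq_atTop, tendsto_cofinite_cocompact_iff]
  intro K hK
  have hfin : (K \ {z | G z ≠ 0}).Finite :=
    hK.finite_sdiff_of_mem_codiscreteWithin (codiscreteWithin_mono (Set.subset_univ K) hcodisc)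
  exact (hfin.preimage ha.injOn).subset fun n hn => ⟨hn, not_not.2 (hzero n)⟩

theorem summable_mul_one_div_sub_sub_one_div {t : ℕ → ℝ}
    (ht : Tendsto (fun n => |t n|) atTop atTop) {c : ℕ → ℂ}
    (hc : Summable fun n => ‖c n‖ / t n ^ 2) (z : ℂ) :
    Summable fun n => c n * (1 / ((t n : ℂ) - z) - 1 / (t n : ℂ)) := by
  refine Summable.of_norm_bounded_eventually_nat (hc.mul_left (2 * ‖z‖)) ?_
  filter_upwards [ht.eventually_gt_atTop (2 * ‖z‖)] with n hn
  have hpos : 0 < |t n| := (by positivity : 0 ≤ 2 * ‖z‖).trans_lt hn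
  have hdist : |t n| / 2 ≤ ‖(t n : ℂ) - z‖ := by
    have := norm_sub_norm_le (t n : ℂ) z
    rw [norm_real, Real.norm_eq_abs] at this
    linarith
  have ht0 : (t n : ℂ) ≠ 0 := by exact_mod_cast abs_pos.1 hpos
  have htz : (t n : ℂ) - z ≠ 0 := norm_pos_iff.1 (by linarith)
  calc ‖c n * (1 / ((t n : ℂ) - z) - 1 / (t n : ℂ))‖
      = ‖c n‖ * ‖z‖ / (‖(t n : ℂ) - z‖ * |t n|) := by
        rw [one_div, one_div, inv_sub_inv htz ht0, sub_sub_cancel, norm_mul, norm_div, norm_mul,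
          norm_real, Real.norm_eq_abs, mul_div_assoc]
    _ ≤ ‖c n‖ * ‖z‖ / (|t n| / 2 * |t n|) := by gcongr
    _ = 2 * ‖z‖ * (‖c n‖ / t n ^ 2) := by
        rw [← sq_abs]; field_simp

theorem one_sub_div_eq_zero_iff {K : Type*} [DivisionRing K] {a b : K} (hb : b ≠ 0) :
    1 - a / b = 0 ↔ a = b := by
  rw [sub_eq_zero, eq_comm, div_eq_one_iff_eq hb]

theorem HasDerivAt.mul_one_sub_div {𝕜 : Type*} [NontriviallyNormedField 𝕜] {G : 𝕜 → 𝕜}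
    {G' z : 𝕜} (h : HasDerivAt G G' z) (s : 𝕜) :
    HasDerivAt (fun w => G w * (1 - w / s)) (G' * (1 - z / s) - G z / s) z := by
  refine (h.mul (((hasDerivAt_id z).div_const s).const_sub 1)).congr_deriv ?_
  simp only [id, one_div]
  ring

theorem deriv_mul_one_sub_div_of_eq_zero {𝕜 : Type*} [NontriviallyNormedField 𝕜] {G : 𝕜 → 𝕜}
    {z : 𝕜} (hG : DifferentiableAt 𝕜 G z) (hz : G z = 0) (s : 𝕜) :
    deriv (fun w => G w * (1 - w / s)) z = deriv G z * (1 - z / s) := by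
  rw [(hG.hasDerivAt.mul_one_sub_div s).deriv, hz, zero_div, sub_zero]

theorem deriv_mul_one_sub_div_self {𝕜 : Type*} [NontriviallyNormedField 𝕜] {G : 𝕜 → 𝕜}
    {s : 𝕜} (hG : DifferentiableAt 𝕜 G s) (hs : s ≠ 0) :
    deriv (fun w => G w * (1 - w / s)) s = -(G s / s) := by
  rw [(hG.hasDerivAt.mul_one_sub_div s).deriv, div_self hs, sub_self, mul_zero, zero_sub]

theorem summable_norm_one_div_mul_one_sub_div {t : ℕ → ℝ}
    (ht : Tendsto (fun n => |t n|) atTop atTop) {d : ℕ → ℂ}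
    (hd : Summable fun n => ‖1 / d n‖ / t n ^ 2) {s : ℝ} (hs : s ≠ 0) :
    Summable fun n => ‖1 / (d n * (1 - t n / s))‖ / t n ^ 2 := by
  refine Summable.of_norm_bounded_eventually_nat hd ?_
  filter_upwards [ht.eventually_ge_atTop (2 * |s|)] with n hn
  have hfactor : 1 ≤ ‖1 - (t n : ℂ) / s‖ := by
    have hquot : 2 ≤ |t n / s| := by
      rw [abs_div, le_div_iff₀ (abs_pos.2 hs)]
      exact hn
    have := abs_sub_abs_le_abs_sub (t n / s) 1
    rw [← ofReal_div, ← ofReal_one, ← ofReal_sub, norm_real, Real.norm_eq_abs, abs_sub_comm]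
    rw [abs_one] at this
    linarith
  rw [Real.norm_of_nonneg (by positivity)]
  gcongr
  calc ‖1 / (d n * (1 - t n / s))‖ = ‖1 / d n‖ / ‖1 - (t n : ℂ) / s‖ := by
        rw [norm_div, norm_div, norm_mul, norm_one, div_div]
    _ ≤ ‖1 / d n‖ := div_le_self (norm_nonneg _) hfactor

/-- Termwise, with `k_w(t) = 1/(t - w) - 1/t`, this is the partial-fraction identity
`k_z(t) / (1 - t/s) = k_z(t) / (1 - z/s) - s k_z(s) k_s(t)`. -/
theorem hasSum_div_one_sub_div {t : ℕ → ℂ} {c : ℕ → ℂ} {q a b s z : ℂ} (hs : s ≠ 0)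
    (ht0 : ∀ n, t n ≠ 0) (hts : ∀ n, t n ≠ s) (hzt : ∀ n, z ≠ t n) (hzs : z ≠ s)
    (ha : HasSum (fun n => c n * (1 / (t n - z) - 1 / t n)) (a - q))
    (hb : HasSum (fun n => c n * (1 / (t n - s) - 1 / t n)) (b - q)) :
    HasSum (fun n => c n / (1 - t n / s) * (1 / (t n - z) - 1 / t n))
      (a / (1 - z / s) - q - s * b * (1 / (s - z) - 1 / s)) := by
  have hterm : ∀ n, c n / (1 - t n / s) * (1 / (t n - z) - 1 / t n) =
      1 / (1 - z / s) * (c n * (1 / (t n - z) - 1 / t n)) -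
        s * (1 / (s - z) - 1 / s) * (c n * (1 / (t n - s) - 1 / t n)) := fun n => by
    have htz : t n - z ≠ 0 := sub_ne_zero.2 (hzt n).symm
    have hts' : t n - s ≠ 0 := sub_ne_zero.2 (hts n)
    have hst : s - t n ≠ 0 := sub_ne_zero.2 (hts n).symm
    rw [one_sub_div hs, one_sub_div hs]
    field_simp [ht0 n]
    ring
  have hvalue : a / (1 - z / s) - q - s * b * (1 / (s - z) - 1 / s) =
      1 / (1 - z / s) * (a - q) - s * (1 / (s - z) - 1 / s) * (b - q) := by
    rw [one_sub_div hs]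
    field_simp
    ring
  rw [funext hterm, hvalue]
  exact (ha.mul_left _).sub (hb.mul_left _)

def consSeq {α : Type*} (a : α) (f : ℕ → α) : ℕ → α
  | 0 => a
  | n + 1 => f n

section consSeq

variable {α : Type*} {a : α} {f : ℕ → α}

@[simp] theorem consSeq_zero : consSeq a f 0 = a := rfl

@[simp] theorem consSeq_succ (n : ℕ) : consSeq a f (n + 1) = f n := rfl

theorem consSeq_injective (hf : Function.Injective f) (ha : ∀ n, f n ≠ a) :
    Function.Injective (consSeq a f)
  | 0, 0, _ => rfl
  | 0, n + 1, h => absurd h.symm (ha n)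
  | m + 1, 0, h => absurd h (ha m)
  | _ + 1, _ + 1, h => congrArg (· + 1) (hf h)

theorem exists_consSeq_iff {p : α → Prop} : (∃ n, p (consSeq a f n)) ↔ p a ∨ ∃ n, p (f n) := by
  rw [← Nat.or_exists_add_one]
  simp only [consSeq_zero, consSeq_succ]

theorem HasSum.consSeq {M : Type*} [AddCommGroup M] [TopologicalSpace M] [IsTopologicalAddGroup M]
    {g : α → M} {x : M} (h : HasSum (fun n => g (f n)) x) (a : α) :
    HasSum (fun n => g (_root_.consSeq a f n)) (g a + x) := by
  simpa [add_comm] using (hasSum_nat_add_iff (f := fun n => g (_root_.consSeq a f n)) 1).1 h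

end consSeq

theorem one_div_mul_one_sub_div_eq_add_tsum {G : ℂ → ℂ} (hdiff : Differentiable ℂ G)
    {t : ℕ → ℝ} (ht0 : ∀ n, t n ≠ 0) (htend : Tendsto (fun n => |t n|) atTop atTop)
    (hGt : ∀ n, G (t n) = 0) (hsum : Summable fun n => ‖1 / deriv G (t n)‖ / t n ^ 2) {q : ℂ}
    (hexp : ∀ z : ℂ, (∀ n, z ≠ t n) →
      1 / G z = q + ∑' n, -1 / deriv G (t n) * (1 / ((t n : ℂ) - z) - 1 / t n))
    {s : ℝ} (hs : s ≠ 0) (hts : ∀ n, t n ≠ s) {z : ℂ}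
    (hz : ∀ n, z ≠ (consSeq s t n : ℝ)) :
    1 / (G z * (1 - z / s)) = q + ∑' n, -1 / deriv (fun w => G w * (1 - w / s))
      (consSeq s t n : ℝ) * (1 / ((consSeq s t n : ℝ) - z) - 1 / (consSeq s t n : ℝ)) := by
  have hsC : (s : ℂ) ≠ 0 := ofReal_ne_zero.2 hs
  have htsC : ∀ n, (t n : ℂ) ≠ s := fun n => ofReal_injective.ne (hts n)
  have hc : Summable fun n => ‖-1 / deriv G (t n)‖ / t n ^ 2 := by
    simpa only [neg_div, norm_neg] using hsum
  have hexpansion : ∀ w : ℂ, (∀ n, w ≠ t n) →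
      HasSum (fun n => -1 / deriv G (t n) * (1 / (t n - w) - 1 / t n)) (1 / G w - q) :=
    fun w hw => by
      rw [hexp w hw, add_sub_cancel_left]
      exact (summable_mul_one_div_sub_sub_one_div htend hc w).hasSum
  have htail : HasSum
      (fun n => -1 / deriv (fun w => G w * (1 - w / s)) (t n) * (1 / (t n - z) - 1 / t n))
      (1 / (G z * (1 - z / s)) - q - s * (1 / G s) * (1 / (s - z) - 1 / s)) := by
    simpa only [deriv_mul_one_sub_div_of_eq_zero (hdiff _) (hGt _), div_div] using
      hasSum_div_one_sub_div hsC (fun n => ofReal_ne_zero.2 (ht0 n)) htsC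
        (fun n => hz (n + 1)) (hz 0) (hexpansion z fun n => hz (n + 1))
        (hexpansion s fun n => (htsC n).symm)
  rw [(HasSum.consSeq (g := fun x : ℝ => -1 / deriv (fun w => G w * (1 - w / s)) x *
      (1 / (x - z) - 1 / x)) htail s).tsum_eq, deriv_mul_one_sub_div_self (hdiff _) hsC]
  field_simp
  ring

theorem KreinK1.mul_one_sub_div {G : ℂ → ℂ} (hG : KreinK1 G) {s : ℝ} (hs : s ≠ 0)
    (hGs : G s ≠ 0) : KreinK1 (fun z => G z * (1 - z / s)) := by
  obtain ⟨hdiff, hreal, h0, hsimple, t, ht0, htinj, hzeros, hsum, q, hexp⟩ := hG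
  have hsC : (s : ℂ) ≠ 0 := ofReal_ne_zero.2 hs
  have hGt : ∀ n, G (t n) = 0 := fun n => (hzeros _).2 ⟨n, rfl⟩
  have hts : ∀ n, t n ≠ s := fun n h => hGs (h ▸ hGt n)
  have htend : Tendsto (fun n => |t n|) atTop atTop := by
    simpa [Function.comp_def] using tendsto_norm_cocompact_atTop.comp
      (hdiff.tendsto_cocompact_of_injective_zeros h0 (ofReal_injective.comp htinj) hGt)
  have hzeros₂ : ∀ z, G z * (1 - z / s) = 0 ↔ z = s ∨ ∃ n, z = t n := fun z => by
    rw [mul_eq_zero, one_sub_div_eq_zero_iff hsC, hzeros, or_comm]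
  refine ⟨hdiff.mul (by fun_prop), fun x => ?_, by simpa using h0, fun z hz => ?_,
    consSeq s t, ?_, consSeq_injective htinj hts, fun z => ?_, ?_, q,
    fun z hz => one_div_mul_one_sub_div_eq_add_tsum hdiff ht0 htend hGt hsum hexp hs hts hz⟩
  · have hfactor : (1 : ℂ) - x / s = ((1 - x / s : ℝ) : ℂ) := by push_cast; rfl
    simp only [hfactor, im_mul_ofReal, hreal x, zero_mul]
  · rcases (hzeros₂ z).1 hz with rfl | ⟨n, rfl⟩
    · rw [deriv_mul_one_sub_div_self (hdiff _) hsC]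
      exact neg_ne_zero.2 (div_ne_zero hGs hsC)
    · rw [deriv_mul_one_sub_div_of_eq_zero (hdiff _) (hGt n)]
      exact mul_ne_zero (hsimple _ (hGt n))
        ((one_sub_div_eq_zero_iff hsC).not.2 (ofReal_injective.ne (hts n)))
  · rintro (_ | n)
    exacts [hs, ht0 n]
  · rw [hzeros₂]
    exact (exists_consSeq_iff (p := fun x : ℝ => z = x)).symm
  · refine (summable_nat_add_iff 1).1 ?_
    simpa only [consSeq_succ, deriv_mul_one_sub_div_of_eq_zero (hdiff _) (hGt _)] using
      summable_norm_one_div_mul_one_sub_div htend hsum hs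

theorem prod_one_sub_div_eq_zero_iff {S : Finset ℝ} (h0 : (0 : ℝ) ∉ S) (z : ℂ) :
    ∏ s ∈ S, (1 - z / s) = 0 ↔ ∃ s ∈ S, z = s := by
  rw [Finset.prod_eq_zero_iff]
  exact exists_congr fun s => and_congr_right fun hs =>
    one_sub_div_eq_zero_iff (ofReal_ne_zero.2 (ne_of_mem_of_not_mem hs h0))

theorem KreinK1.mul_prod_one_sub_div {F : ℂ → ℂ} (hF : KreinK1 F) {S : Finset ℝ}
    (h0 : (0 : ℝ) ∉ S) (hdisj : ∀ s ∈ S, F s ≠ 0) :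
    KreinK1 (fun z => F z * ∏ s ∈ S, (1 - z / s)) := by
  induction S using Finset.induction_on with
  | empty => simpa using hF
  | @insert a T haT ih =>
    rw [Finset.mem_insert, not_or] at h0
    rw [Finset.forall_mem_insert] at hdisj
    have hprod : ∏ u ∈ T, (1 - (a : ℂ) / u) ≠ 0 := by
      rw [Ne, prod_one_sub_div_eq_zero_iff h0.2]
      rintro ⟨u, hu, hau⟩
      exact haT (ofReal_injective hau ▸ hu)
    convert (ih h0.2 hdisj.2).mul_one_sub_div (Ne.symm h0.1) (mul_ne_zero hdisj.1 hprod) using 2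
    rw [Finset.prod_insert haT]
    ring

theorem stmt_8_general (F : ℂ → ℂ) (hF : KreinK1 F)
    (S : Finset ℝ) (h0 : (0 : ℝ) ∉ S)
    (hdisj : ∀ s ∈ S, F ((s : ℂ)) ≠ 0) :
    KreinK1 (fun z => F z * ∏ s ∈ S, (1 - z / (s : ℂ))) ∧
    (∀ z : ℂ, F z * ∏ s ∈ S, (1 - z / (s : ℂ)) = 0 ↔
      (F z = 0 ∨ ∃ s ∈ S, z = (s : ℂ))) :=
  ⟨hF.mul_prod_one_sub_div h0 hdisj, fun z => by
    rw [mul_eq_zero, prod_one_sub_div_eq_zero_iff h0]⟩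

/-- If `F ∈ 𝒦₁` and `S` is a nonempty finite set of real points,
none of which is `0` or a zero of `F`, then `G(z) = F(z)·∏_{s∈S}(1 - z/s)` is
again in `𝒦₁`; in particular the zero set of `G` is the zero set of `F`
together with `S`. -/
theorem stmt_8 (F : ℂ → ℂ) (hF : KreinK1 F)
    (S : Finset ℝ) (hS : S.Nonempty) (h0 : (0 : ℝ) ∉ S)
    (hdisj : ∀ s ∈ S, F ((s : ℂ)) ≠ 0) :
    KreinK1 (fun z => F z * ∏ s ∈ S, (1 - z / (s : ℂ))) ∧
    (∀ z : ℂ, F z * ∏ s ∈ S, (1 - z / (s : ℂ)) = 0 ↔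
      (F z = 0 ∨ ∃ s ∈ S, z = (s : ℂ))) :=
  stmt_8_general F hF S h0 hdisj
end
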